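/- Let n, m, n' and m' be nonnegative integers such that n+m = n'+m' and this common sum is odd. Then the partisan chocolate game positions PC(n,m) and PC(n',m') are equivalent (equal as normal-play game values). -/

import Mathlib

/-!
Order the positions by `PC.key`. Left moves strictly decrease the key and Right moves strictly
increase it, and whenever `key a b < key c d`, either Left can move from `(c, d)` to a position
whose key is still at least `key a b`, or Right can move from `(a, b)` to one whose key is still
at most `key c d`. A simultaneous induction then shows that `key a b ≤ key c d` gives
`PC a b ≤ PC c d` and `key a b < key c d` gives `PC a b ⧏ PC c d`. Positions with the same odd sum
have the same key, hence equivalent values.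
-/

universe u

namespace SetTheory

/-- Pre-games, as in the older Mathlib (`SetTheory.PGame`, since removed from Mathlib). -/
inductive PGame : Type (u + 1)
  | mk : ∀ α β : Type u, (α → PGame) → (β → PGame) → PGame

namespace PGame

/-- Simultaneous definition of `x ≤ y` (first component) and `x ⧏ y` (second component). -/
noncomputable def leLF (x : PGame.{u}) : PGame.{u} → Prop × Prop :=
  PGame.rec (motive := fun _ => PGame.{u} → Prop × Prop)
    (fun _ _ _ _ IHxL IHxR y =>
      PGame.rec (motive := fun _ => Prop × Prop)
        (fun yl yr yL yR IHyL IHyR =>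
          ((∀ i, (IHxL i (mk yl yr yL yR)).2) ∧ (∀ j, (IHyR j).2),
            (∃ i, (IHyL i).1) ∨ (∃ j, (IHxR j (mk yl yr yL yR)).1))) y) x

noncomputable instance le : LE PGame.{u} :=
  ⟨fun x y => (leLF x y).1⟩

/-- Equivalence of pre-games, as in the older Mathlib. -/
def Equiv (x y : PGame.{u}) : Prop :=
  x ≤ y ∧ y ≤ x

end PGame

end SetTheory

open SetTheory

/-- The partisan chocolate game position `PC n m`.
Left options: `PC n' m` with `n' < n` and `n' + m` even, and `PC n m'` with `m' < m` and
`n + m'` even. Right options: the same with "odd" in place of "even". -/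
def PC : ℕ → ℕ → SetTheory.PGame
  | n, m =>
    SetTheory.PGame.mk
      {p : ℕ × ℕ // (p.2 = m ∧ p.1 < n ∧ Even (p.1 + m)) ∨ (p.1 = n ∧ p.2 < m ∧ Even (n + p.2))}
      {p : ℕ × ℕ // (p.2 = m ∧ p.1 < n ∧ Odd (p.1 + m)) ∨ (p.1 = n ∧ p.2 < m ∧ Odd (n + p.2))}
      (fun p => PC p.1.1 p.1.2)
      (fun p => PC p.1.1 p.1.2)
termination_by n m => n + m
decreasing_by
  all_goals rcases p.2 with ⟨h1, h2, -⟩ | ⟨h1, h2, -⟩ <;> omega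

namespace SetTheory.PGame

def LF (x y : PGame.{u}) : Prop :=
  (leLF x y).2

infix:50 " ⧏ " => SetTheory.PGame.LF

theorem mk_le_mk {xl xr : Type u} {xL : xl → PGame.{u}} {xR : xr → PGame.{u}}
    {yl yr : Type u} {yL : yl → PGame.{u}} {yR : yr → PGame.{u}} :
    mk xl xr xL xR ≤ mk yl yr yL yR ↔
      (∀ i, xL i ⧏ mk yl yr yL yR) ∧ ∀ j, mk xl xr xL xR ⧏ yR j :=
  Iff.rfl

theorem lf_mk_of_le {x : PGame.{u}} {yl yr : Type u} {yL : yl → PGame.{u}}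
    {yR : yr → PGame.{u}} (i : yl) (h : x ≤ yL i) : x ⧏ mk yl yr yL yR := by
  cases x
  exact Or.inl ⟨i, h⟩

theorem mk_lf_of_le {y : PGame.{u}} {xl xr : Type u} {xL : xl → PGame.{u}}
    {xR : xr → PGame.{u}} (j : xr) (h : xR j ≤ y) : mk xl xr xL xR ⧏ y := by
  cases y
  exact Or.inr ⟨j, h⟩

end SetTheory.PGame

open SetTheory.PGame

namespace PC

/-- `(c, d)` is reached from `(a, b)` by one move, of either player. -/
def IsMove (a b c d : ℕ) : Prop :=
  (d = b ∧ c < a) ∨ (c = a ∧ d < b)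

theorem IsMove.add_lt {a b c d : ℕ} (h : IsMove a b c d) : c + d < a + b := by
  rcases h with ⟨rfl, h⟩ | ⟨rfl, h⟩ <;> omega

theorem eq_mk (n m : ℕ) : PC n m =
    SetTheory.PGame.mk
      {p : ℕ × ℕ // (p.2 = m ∧ p.1 < n ∧ Even (p.1 + m)) ∨ (p.1 = n ∧ p.2 < m ∧ Even (n + p.2))}
      {p : ℕ × ℕ // (p.2 = m ∧ p.1 < n ∧ Odd (p.1 + m)) ∨ (p.1 = n ∧ p.2 < m ∧ Odd (n + p.2))}
      (fun p => PC p.1.1 p.1.2)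
      (fun p => PC p.1.1 p.1.2) := by
  rw [PC]

theorem le_of_forall_lf {a b c d : ℕ}
    (hL : ∀ a' b', IsMove a b a' b' → Even (a' + b') → PC a' b' ⧏ PC c d)
    (hR : ∀ c' d', IsMove c d c' d' → Odd (c' + d') → PC a b ⧏ PC c' d') :
    PC a b ≤ PC c d := by
  rw [eq_mk a b, eq_mk c d, mk_le_mk, ← eq_mk a b, ← eq_mk c d]
  constructor
  · rintro ⟨⟨a', b'⟩, ⟨rfl, h, he⟩ | ⟨rfl, h, he⟩⟩
    exacts [hL _ _ (.inl ⟨rfl, h⟩) he, hL _ _ (.inr ⟨rfl, h⟩) he]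
  · rintro ⟨⟨c', d'⟩, ⟨rfl, h, ho⟩ | ⟨rfl, h, ho⟩⟩
    exacts [hR _ _ (.inl ⟨rfl, h⟩) ho, hR _ _ (.inr ⟨rfl, h⟩) ho]

theorem lf_of_le_left_move {a b c d c' d' : ℕ} (h : IsMove c d c' d') (he : Even (c' + d'))
    (hle : PC a b ≤ PC c' d') : PC a b ⧏ PC c d := by
  rw [eq_mk c d]
  rcases h with ⟨rfl, h⟩ | ⟨rfl, h⟩
  exacts [lf_mk_of_le ⟨(c', d'), .inl ⟨rfl, h, he⟩⟩ hle,
    lf_mk_of_le ⟨(c', d'), .inr ⟨rfl, h, he⟩⟩ hle]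

theorem lf_of_right_move_le {a b a' b' c d : ℕ} (h : IsMove a b a' b') (ho : Odd (a' + b'))
    (hle : PC a' b' ≤ PC c d) : PC a b ⧏ PC c d := by
  rw [eq_mk a b]
  rcases h with ⟨rfl, h⟩ | ⟨rfl, h⟩
  exacts [mk_lf_of_le ⟨(a', b'), .inl ⟨rfl, h, ho⟩⟩ hle,
    mk_lf_of_le ⟨(a', b'), .inr ⟨rfl, h, ho⟩⟩ hle]

/-- Even-sum positions increase with `a / 2 + b / 2`, odd-sum positions decrease with it, and
every even-sum position lies below every odd-sum one. -/
def key (a b : ℕ) : ℕ ×ₗ ℤ :=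
  toLex ((a + b) % 2,
    if (a + b) % 2 = 0 then ((a / 2 + b / 2 : ℕ) : ℤ) else -((a / 2 + b / 2 : ℕ) : ℤ))

theorem key_lt_of_left_move {a b a' b' : ℕ} (h : IsMove a b a' b') (he : Even (a' + b')) :
    key a' b' < key a b := by
  rw [Nat.even_iff] at he
  simp only [key, Prod.Lex.toLex_lt_toLex]
  rcases h with ⟨rfl, h⟩ | ⟨rfl, h⟩ <;> split_ifs <;> omega

theorem key_lt_of_right_move {a b a' b' : ℕ} (h : IsMove a b a' b') (ho : Odd (a' + b')) :
    key a b < key a' b' := by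
  rw [Nat.odd_iff] at ho
  simp only [key, Prod.Lex.toLex_lt_toLex]
  rcases h with ⟨rfl, h⟩ | ⟨rfl, h⟩ <;> split_ifs <;> omega

theorem exists_move_of_key_lt {a b c d : ℕ} (h : key a b < key c d) :
    (∃ c' d', IsMove c d c' d' ∧ Even (c' + d') ∧ key a b ≤ key c' d') ∨
      (∃ a' b', IsMove a b a' b' ∧ Odd (a' + b') ∧ key a' b' ≤ key c d) := by
  simp only [key, Prod.Lex.toLex_lt_toLex] at h
  split_ifs at h with hab hcd hcd
  · left
    refine if hc : 2 ≤ c then ⟨c - 2, d, .inl ⟨rfl, by omega⟩, Nat.even_iff.2 (by omega), ?_⟩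
      else ⟨c, d - 2, .inr ⟨rfl, by omega⟩, Nat.even_iff.2 (by omega), ?_⟩
    all_goals simp only [key, Prod.Lex.toLex_le_toLex]; split_ifs <;> omega
  · by_cases hs : c + d ≤ a + b
    · right
      refine if ha : 1 ≤ a then ⟨a - 1, b, .inl ⟨rfl, by omega⟩, Nat.odd_iff.2 (by omega), ?_⟩
        else ⟨a, b - 1, .inr ⟨rfl, by omega⟩, Nat.odd_iff.2 (by omega), ?_⟩
      all_goals simp only [key, Prod.Lex.toLex_le_toLex]; split_ifs <;> omega
    · -- Left moves to the even-sum position below `(c, d)` with both coordinates even.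
      left
      refine if hc : c % 2 = 0 then ⟨c, d - 1, .inr ⟨rfl, by omega⟩, Nat.even_iff.2 (by omega), ?_⟩
        else ⟨c - 1, d, .inl ⟨rfl, by omega⟩, Nat.even_iff.2 (by omega), ?_⟩
      all_goals simp only [key, Prod.Lex.toLex_le_toLex]; split_ifs <;> omega
  · omega
  · right
    refine if ha : 2 ≤ a then ⟨a - 2, b, .inl ⟨rfl, by omega⟩, Nat.odd_iff.2 (by omega), ?_⟩
      else ⟨a, b - 2, .inr ⟨rfl, by omega⟩, Nat.odd_iff.2 (by omega), ?_⟩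
    all_goals simp only [key, Prod.Lex.toLex_le_toLex]; split_ifs <;> omega

theorem le_of_key_le_and_lf_of_key_lt (a b c d : ℕ) :
    (key a b ≤ key c d → PC a b ≤ PC c d) ∧ (key a b < key c d → PC a b ⧏ PC c d) := by
  induction hN : a + b + c + d using Nat.strong_induction_on generalizing a b c d with
  | _ N ih =>
  subst hN
  have ih' (a' b' c' d' : ℕ) (h : a' + b' + c' + d' < a + b + c + d) := ih _ h a' b' c' d' rfl
  constructor
  · intro hk
    refine le_of_forall_lf (fun a' b' hm he => ?_) (fun c' d' hm ho => ?_)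
    · exact (ih' a' b' c d (by have := hm.add_lt; omega)).2
        ((key_lt_of_left_move hm he).trans_le hk)
    · exact (ih' a b c' d' (by have := hm.add_lt; omega)).2
        (hk.trans_lt (key_lt_of_right_move hm ho))
  · intro hk
    rcases exists_move_of_key_lt hk with ⟨c', d', hm, he, hk'⟩ | ⟨a', b', hm, ho, hk'⟩
    · exact lf_of_le_left_move hm he ((ih' a b c' d' (by have := hm.add_lt; omega)).1 hk')
    · exact lf_of_right_move_le hm ho ((ih' a' b' c d (by have := hm.add_lt; omega)).1 hk')

theorem equiv_of_key_eq {a b c d : ℕ} (h : key a b = key c d) : (PC a b).Equiv (PC c d) :=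
  ⟨(le_of_key_le_and_lf_of_key_lt a b c d).1 h.le, (le_of_key_le_and_lf_of_key_lt c d a b).1 h.ge⟩

end PC

theorem stmt_6 (n m n' m' : ℕ) (hsum : n + m = n' + m') (hodd : Odd (n + m)) :
    (PC n m).Equiv (PC n' m') := by
  apply PC.equiv_of_key_eq
  rw [Nat.odd_iff] at hodd
  simp only [PC.key, ← hsum, hodd]
  congr 2
  omega
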